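/- Let $0 < d \le 1 \le u$ with $u \ne d$, and set $\tilde{k}_0(n,u,d) = \lfloor n \ln(1/d)/\ln(u/d) \rfloor$. Then $B(n,u,d) = (1/2)^{n-1} \sum_{k=\tilde{k}_0(n,u,d)+1}^{n} \binom{n}{k}$ converges, as $n \to \infty$, to $0$ if $ud < 1$, to $1$ if $ud = 1$, and to $2$ if $ud > 1$. -/

import Mathlib

open Filter

/-- Threshold separating losing from winning numbers of heads. -/
noncomputable def ktilde (n : ℕ) (u d : ℝ) : ℕ :=
  ⌊(n : ℝ) * Real.log (1/d) / Real.log (u/d)⌋₊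

/-- Twice the probability that a Binomial(n,1/2) random variable exceeds the threshold. -/
noncomputable def B (n : ℕ) (u d : ℝ) : ℝ :=
  (1/2 : ℝ)^(n-1) * ∑ k ∈ Finset.Icc (ktilde n u d + 1) n, (n.choose k : ℝ)

/-!
With `x = log (1/d) / log (u/d)` we have `ktilde n u d = ⌊n x⌋` and `B n u d` is twice the
probability that a fair-coin binomial `S_n` exceeds `n x`; moreover `x - 1/2` has the sign of
`-log (u d)`. By Chebyshev's inequality, from `∑ C(n,k) (2k - n)² = n 2ⁿ`, the binomial mass on
`|2k - n| ≥ c n` is `O(2ⁿ/n)`, so the probability tends to `0` for `x > 1/2` and to `1` for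
`x < 1/2`. For `x = 1/2`, symmetry `k ↦ n - k` makes it exactly `1/2` for odd `n` and
`1/2 - C(2j,j)/2^(2j+1)` for `n = 2j`, and `(2j+1) C(2j,j)² ≤ 16^j` makes the central term
negligible.
-/

open Finset Real Topology

theorem sum_range_choose_mul_sq_two_mul_sub (n : ℕ) :
    ∑ k ∈ range (n + 1), (n.choose k : ℝ) * (2 * k - n) ^ 2 = (n : ℝ) * 2 ^ n := by
  induction n with
  | zero => simp
  | succ n ih =>
    -- Pascal's rule, and `(2k - n - 1)² + (2k - n + 1)² = 2 (2k - n)² + 2`.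
    have hsub : ∀ {m k : ℕ}, k ∈ range (m + 1) → ((m - k : ℕ) : ℝ) = m - k := fun hk =>
      Nat.cast_sub (Nat.lt_succ_iff.mp (mem_range.mp hk))
    have hsum : ∑ k ∈ range (n + 1), (n.choose k : ℝ) = 2 ^ n := by
      exact_mod_cast Nat.sum_range_choose n
    calc ∑ k ∈ range (n + 1 + 1), ((n + 1).choose k : ℝ) * (2 * k - (n + 1 : ℕ)) ^ 2
        = ∑ k ∈ range (n + 2), ((n + 1).choose k : ℝ) * ((k : ℝ) - (n + 1 - k : ℕ)) ^ 2 :=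
          sum_congr rfl fun k hk => by rw [hsub hk]; ring
      _ = ∑ k ∈ range (n + 1), ((n.choose k : ℝ) * ((k : ℝ) - (n + 1 - k : ℕ)) ^ 2
            + (n.choose k : ℝ) * ((k + 1 : ℕ) - ((n - k : ℕ) : ℝ)) ^ 2) := by
          rw [sum_add_distrib]; exact sum_choose_succ_mul (fun i j => ((i : ℝ) - j) ^ 2) n
      _ = ∑ k ∈ range (n + 1), (2 * ((n.choose k : ℝ) * (2 * k - n) ^ 2) + 2 * n.choose k) :=
          sum_congr rfl fun k hk => by
            rw [hsub hk, hsub (mem_range.mpr (Nat.lt_succ_of_lt (mem_range.mp hk)))]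
            push_cast; ring
      _ = ((n + 1 : ℕ) : ℝ) * 2 ^ (n + 1) := by
          rw [sum_add_distrib, ← mul_sum, ← mul_sum, ih, hsum]; push_cast; ring

theorem sum_choose_mul_le_of_le_sq {n : ℕ} {s : Finset ℕ} (hs : s ⊆ range (n + 1)) {r : ℝ}
    (hr : ∀ k ∈ s, r ≤ (2 * k - n) ^ 2) :
    r * ∑ k ∈ s, (n.choose k : ℝ) ≤ (n : ℝ) * 2 ^ n :=
  calc r * ∑ k ∈ s, (n.choose k : ℝ)
      = ∑ k ∈ s, (n.choose k : ℝ) * r := by rw [mul_sum]; simp_rw [mul_comm]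
    _ ≤ ∑ k ∈ s, (n.choose k : ℝ) * (2 * k - n) ^ 2 :=
      sum_le_sum fun k hk => mul_le_mul_of_nonneg_left (hr k hk) (Nat.cast_nonneg _)
    _ ≤ ∑ k ∈ range (n + 1), (n.choose k : ℝ) * (2 * k - n) ^ 2 :=
      sum_le_sum_of_subset_of_nonneg hs fun _ _ _ => by positivity
    _ = (n : ℝ) * 2 ^ n := sum_range_choose_mul_sq_two_mul_sub n

theorem tendsto_sum_choose_div_two_pow_of_le_abs {c : ℝ} (hc : 0 < c) {s : ℕ → Finset ℕ}
    (hs : ∀ n, s n ⊆ range (n + 1))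
    (hfar : ∀ n, ∀ k ∈ s n, c * n ≤ |2 * (k : ℝ) - n|) :
    Tendsto (fun n => (∑ k ∈ s n, (n.choose k : ℝ)) / 2 ^ n) atTop (𝓝 0) := by
  refine tendsto_of_tendsto_of_tendsto_of_le_of_le' tendsto_const_nhds
    (tendsto_const_div_atTop_nhds_zero_nat (c ^ 2)⁻¹)
    (Eventually.of_forall fun n => by positivity) ?_
  filter_upwards [eventually_gt_atTop 0] with n hn
  have hn' : (0 : ℝ) < n := Nat.cast_pos.mpr hn
  have hcheb := sum_choose_mul_le_of_le_sq (hs n) (r := (c * n) ^ 2) fun k hk => by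
    rw [← sq_abs (2 * (k : ℝ) - n)]
    exact pow_le_pow_left₀ (by positivity) (hfar n k hk) 2
  have hsum : c ^ 2 * n * ∑ k ∈ s n, (n.choose k : ℝ) ≤ 2 ^ n :=
    le_of_mul_le_mul_left (by linarith) hn'
  rw [div_le_div_iff₀ (by positivity) hn', ← div_le_iff₀' (by positivity), div_inv_eq_mul]
  linarith

theorem sum_range_choose_add_sum_Icc_choose {n m : ℕ} (h : m ≤ n) :
    ∑ k ∈ range (m + 1), n.choose k + ∑ k ∈ Icc (m + 1) n, n.choose k = 2 ^ n := by
  rw [← Ico_add_one_right_eq_Icc, sum_range_add_sum_Ico _ (by omega), Nat.sum_range_choose]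

theorem sum_Icc_choose_eq_sum_range (n m : ℕ) :
    ∑ k ∈ Icc (m + 1) n, n.choose k = ∑ k ∈ range (n - m), n.choose k := by
  rw [← Ico_add_one_right_eq_Icc, range_eq_Ico, ← Nat.sub_self (n + 1),
    show n - m = n + 1 - (m + 1) by omega, ← sum_Ico_reflect _ _ le_rfl]
  exact sum_congr rfl fun k hk => (Nat.choose_symm (by grind)).symm

theorem two_mul_sum_Icc_choose_add_centralBinom (j : ℕ) :
    2 * ∑ k ∈ Icc (j + 1) (2 * j), (2 * j).choose k + j.centralBinom = 4 ^ j := by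
  have hsplit := sum_range_choose_add_sum_Icc_choose (n := 2 * j) (m := j) (by omega)
  have hreflect := sum_Icc_choose_eq_sum_range (2 * j) j
  rw [show 2 * j - j = j by omega] at hreflect
  rw [sum_range_succ, ← hreflect, pow_mul, show (2 : ℕ) ^ 2 = 4 from rfl] at hsplit
  rw [Nat.centralBinom_eq_two_mul_choose]
  omega

theorem sum_Icc_choose_two_mul_add_one (j : ℕ) :
    ∑ k ∈ Icc (j + 1) (2 * j + 1), (2 * j + 1).choose k = 4 ^ j := by
  have hsplit := sum_range_choose_add_sum_Icc_choose (n := 2 * j + 1) (m := j) (by omega)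
  rw [Nat.sum_range_choose_halfway, pow_succ, pow_mul, show (2 : ℕ) ^ 2 = 4 from rfl] at hsplit
  omega

theorem two_mul_add_one_mul_centralBinom_sq_le (n : ℕ) :
    (2 * n + 1) * n.centralBinom ^ 2 ≤ 16 ^ n := by
  induction n with
  | zero => simp
  | succ n ih =>
    have hrec := Nat.succ_mul_centralBinom_succ n
    refine Nat.le_of_mul_le_mul_left ?_ (by positivity : 0 < (n + 1) ^ 2)
    calc (n + 1) ^ 2 * ((2 * (n + 1) + 1) * (n + 1).centralBinom ^ 2)
        = (2 * n + 3) * ((n + 1) * (n + 1).centralBinom) ^ 2 := by ring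
      _ = 4 * ((2 * n + 3) * (2 * n + 1)) * ((2 * n + 1) * n.centralBinom ^ 2) := by
          rw [hrec]; ring
      _ ≤ 4 * (4 * (n + 1) ^ 2) * 16 ^ n :=
          Nat.mul_le_mul (Nat.mul_le_mul_left 4 (by nlinarith)) ih
      _ = (n + 1) ^ 2 * 16 ^ (n + 1) := by ring

theorem tendsto_centralBinom_div_four_pow :
    Tendsto (fun n => (n.centralBinom : ℝ) / 4 ^ n) atTop (𝓝 0) := by
  have hsqrt : Tendsto (fun n : ℕ => √(1 / n)) atTop (𝓝 0) := by
    simpa using (tendsto_const_div_atTop_nhds_zero_nat 1).sqrt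
  refine tendsto_of_tendsto_of_tendsto_of_le_of_le' tendsto_const_nhds hsqrt
    (Eventually.of_forall fun n => by positivity) ?_
  filter_upwards [eventually_gt_atTop 0] with n hn
  have hbound : ((2 * n + 1 : ℕ) : ℝ) * n.centralBinom ^ 2 ≤ (16 : ℕ) ^ n := by
    exact_mod_cast two_mul_add_one_mul_centralBinom_sq_le n
  apply Real.le_sqrt_of_sq_le
  rw [div_pow, ← pow_mul, div_le_div_iff₀ (by positivity) (by positivity)]
  push_cast at hbound
  rw [pow_mul', one_mul, show (4 : ℝ) ^ 2 = 16 by norm_num]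
  nlinarith

noncomputable def binomUpperTail (n : ℕ) (x : ℝ) : ℝ :=
  (∑ k ∈ Icc (⌊n * x⌋₊ + 1) n, (n.choose k : ℝ)) / 2 ^ n

theorem tendsto_binomUpperTail_of_half_lt {x : ℝ} (hx : 1 / 2 < x) :
    Tendsto (binomUpperTail · x) atTop (𝓝 0) := by
  refine tendsto_sum_choose_div_two_pow_of_le_abs (c := 2 * x - 1) (by linarith)
    (fun n k hk => mem_range.mpr (by grind)) fun n k hk => ?_
  have hk : (n : ℝ) * x < k :=
    (Nat.lt_floor_add_one _).trans_le (by exact_mod_cast (mem_Icc.mp hk).1)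
  exact (by linarith : (2 * x - 1) * n ≤ 2 * k - n).trans (le_abs_self _)

theorem tendsto_binomUpperTail_of_lt_half {x : ℝ} (hx0 : 0 ≤ x) (hx : x < 1 / 2) :
    Tendsto (binomUpperTail · x) atTop (𝓝 1) := by
  have hfloor (n : ℕ) : ⌊n * x⌋₊ ≤ n :=
    Nat.floor_le_of_le (by nlinarith [n.cast_nonneg (α := ℝ)])
  have hlower := tendsto_sum_choose_div_two_pow_of_le_abs (c := 1 - 2 * x) (by linarith)
    (s := fun n => range (⌊n * x⌋₊ + 1)) (fun n => range_subset_range.mpr (by grind))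
    fun n k hk => by
      have hk : (k : ℝ) ≤ n * x :=
        (Nat.cast_le.mpr (Nat.lt_succ_iff.mp (mem_range.mp hk))).trans
          (Nat.floor_le (by positivity))
      exact (by linarith : (1 - 2 * x) * n ≤ -(2 * k - n)).trans (neg_le_abs _)
  rw [← sub_zero (1 : ℝ)]
  refine (tendsto_const_nhds.sub hlower).congr fun n => ?_
  have hsplit : ∑ k ∈ range (⌊n * x⌋₊ + 1), (n.choose k : ℝ)
      + ∑ k ∈ Icc (⌊n * x⌋₊ + 1) n, (n.choose k : ℝ) = 2 ^ n := by
    exact_mod_cast sum_range_choose_add_sum_Icc_choose (hfloor n)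
  rw [binomUpperTail, eq_div_iff (by positivity), sub_mul, div_mul_cancel₀ _ (by positivity),
    one_mul]
  linarith

theorem binomUpperTail_two_mul_half (j : ℕ) :
    binomUpperTail (2 * j) (1 / 2) = 1 / 2 - j.centralBinom / 4 ^ j / 2 := by
  have h :
      2 * ∑ k ∈ Icc (j + 1) (2 * j), ((2 * j).choose k : ℝ) + j.centralBinom = 4 ^ j := by
    exact_mod_cast two_mul_sum_Icc_choose_add_centralBinom j
  have hfloor : ⌊((2 * j : ℕ) : ℝ) * (1 / 2)⌋₊ = j := by
    rw [Nat.floor_eq_iff (by positivity)]; push_cast; constructor <;> linarith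
  rw [binomUpperTail, hfloor, pow_mul, show (2 : ℝ) ^ 2 = 4 by norm_num,
    div_eq_iff (by positivity)]
  field_simp
  linear_combination h

theorem binomUpperTail_two_mul_add_one_half (j : ℕ) :
    binomUpperTail (2 * j + 1) (1 / 2) = 1 / 2 := by
  have h : ∑ k ∈ Icc (j + 1) (2 * j + 1), ((2 * j + 1).choose k : ℝ) = 4 ^ j := by
    exact_mod_cast sum_Icc_choose_two_mul_add_one j
  have hfloor : ⌊((2 * j + 1 : ℕ) : ℝ) * (1 / 2)⌋₊ = j := by
    rw [Nat.floor_eq_iff (by positivity)]; push_cast; constructor <;> linarith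
  rw [binomUpperTail, hfloor, pow_succ, pow_mul, h, show (2 : ℝ) ^ 2 = 4 by norm_num]
  field_simp

theorem tendsto_binomUpperTail_half :
    Tendsto (binomUpperTail · (1 / 2)) atTop (𝓝 (1 / 2)) := by
  have hmiddle : Tendsto (fun n : ℕ => (1 / 2 : ℝ) - (n / 2).centralBinom / 4 ^ (n / 2) / 2)
      atTop (𝓝 (1 / 2)) := by
    simpa using tendsto_const_nhds.sub <|
      (tendsto_centralBinom_div_four_pow.comp (Nat.tendsto_div_const_atTop two_ne_zero)).div_const 2
  refine tendsto_of_tendsto_of_tendsto_of_le_of_le hmiddle tendsto_const_nhds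
    (fun n => ?_) fun n => ?_
  · obtain ⟨j, rfl | rfl⟩ := Nat.even_or_odd' n
    · rw [binomUpperTail_two_mul_half, Nat.mul_div_cancel_left j two_pos]
    · rw [binomUpperTail_two_mul_add_one_half]
      exact sub_le_self _ (by positivity)
  · obtain ⟨j, rfl | rfl⟩ := Nat.even_or_odd' n
    · rw [binomUpperTail_two_mul_half]
      exact sub_le_self _ (by positivity)
    · rw [binomUpperTail_two_mul_add_one_half]

theorem B_eq_two_mul_binomUpperTail {n : ℕ} (hn : n ≠ 0) (u d : ℝ) :
    B n u d = 2 * binomUpperTail n (log (1 / d) / log (u / d)) := by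
  obtain ⟨m, rfl⟩ := Nat.exists_eq_add_one_of_ne_zero hn
  rw [B, ktilde, binomUpperTail, mul_div_assoc, Nat.add_sub_cancel, pow_succ, div_pow, one_pow]
  field_simp

theorem log_one_div_div_log_div_sub_half {u d : ℝ} (hu : u ≠ 0) (hd : d ≠ 0)
    (h : log (u / d) ≠ 0) :
    log (1 / d) / log (u / d) - 1 / 2 = -log (u * d) / (2 * log (u / d)) := by
  rw [one_div, log_inv, log_mul hu hd]
  field_simp
  rw [log_div hu hd]
  ring

theorem winning_prob_threshold (u d : ℝ)
    (hd0 : 0 < d) (hd1 : d ≤ 1) (hu : 1 ≤ u) (hne : u ≠ d) :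
    (u * d < 1 → Tendsto (fun n : ℕ => B n u d) atTop (nhds 0)) ∧
    (u * d = 1 → Tendsto (fun n : ℕ => B n u d) atTop (nhds 1)) ∧
    (1 < u * d → Tendsto (fun n : ℕ => B n u d) atTop (nhds 2)) := by
  have hu0 : 0 < u := one_pos.trans_le hu
  have hlog : 0 < log (u / d) :=
    log_pos ((one_lt_div hd0).mpr ((hd1.trans hu).lt_of_ne hne.symm))
  set x := log (1 / d) / log (u / d)
  have hB : (fun n => 2 * binomUpperTail n x) =ᶠ[atTop] fun n => B n u d :=
    (eventually_ne_atTop 0).mono fun n hn => (B_eq_two_mul_binomUpperTail hn u d).symm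
  have hx := log_one_div_div_log_div_sub_half hu0.ne' hd0.ne' hlog.ne'
  have h2log : 0 < 2 * log (u / d) := by positivity
  refine ⟨fun h => ?_, fun h => ?_, fun h => ?_⟩
  · have hlt : 1 / 2 < x := by
      have := div_pos (neg_pos.mpr (log_neg (by positivity) h)) h2log
      linarith
    simpa using ((tendsto_binomUpperTail_of_half_lt hlt).const_mul 2).congr' hB
  · have heq : x = 1 / 2 := by
      rw [h, log_one, neg_zero, zero_div] at hx
      linarith
    rw [heq] at hB
    simpa using (tendsto_binomUpperTail_half.const_mul 2).congr' hB
  · have hlt : x < 1 / 2 := by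
      have := div_neg_of_neg_of_pos (neg_neg_of_pos (log_pos h)) h2log
      linarith
    have hx0 : 0 ≤ x := div_nonneg (log_nonneg (one_le_one_div hd0 hd1)) hlog.le
    simpa using ((tendsto_binomUpperTail_of_lt_half hx0 hlt).const_mul 2).congr' hB
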